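/- Let a(t) := 1 − β(1 − e^{−t/(κ w*)}) ∫ e^{−t/(κ w(z))} g₀(z) μ(dz), where g₀ is a probability density, β ∈ (0,1], κ > 0, w : X → (0, ∞) with sup w = w* < ∞, and suppose β g₀(z) ≤ g(z) for a probability density g. Then lim_{t → 0+} a(t)^{1/t} = exp(−β/(κ w*)). -/

import Mathlib

open MeasureTheory Real Filter Set Topology

/-!
Write `a(t) = 1 - f t`. The factor `1 - e^{-t/(κ w*)}` has slope `1/(κ w*)` at `0`, and the
integral tends to `∫ g₀ = 1` by dominated convergence (the integrand is bounded by `|g₀|`),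
so `f t / t → β/(κ w*)`. Squeezing `log (1 - u)` between `-u / (1 - u)` and `-u`
(from `1 - x⁻¹ ≤ log x ≤ x - 1`) then gives `log a(t) / t → -β/(κ w*)`.
-/

theorem tendsto_one_sub_rpow_one_div {f : ℝ → ℝ} {L : ℝ}
    (hf : Tendsto (fun t => f t / t) (𝓝[>] 0) (𝓝 L)) :
    Tendsto (fun t => (1 - f t) ^ (1 / t)) (𝓝[>] 0) (𝓝 (exp (-L))) := by
  have hf0 : Tendsto f (𝓝[>] 0) (𝓝 0) := by
    have := hf.mul (tendsto_nhdsWithin_of_tendsto_nhds (tendsto_id (x := 𝓝 (0 : ℝ))))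
    rw [mul_zero] at this
    refine this.congr' ?_
    filter_upwards [self_mem_nhdsWithin] with t ht
    exact div_mul_cancel₀ _ (ne_of_gt ht)
  have hlt : ∀ᶠ t in 𝓝[>] 0, f t < 1 := hf0.eventually (eventually_lt_nhds one_pos)
  have hlog : Tendsto (fun t => log (1 - f t) / t) (𝓝[>] 0) (𝓝 (-L)) := by
    have hlower : Tendsto (fun t => -(f t / t) / (1 - f t)) (𝓝[>] 0) (𝓝 (-L)) := by
      have := hf.neg.div (tendsto_const_nhds.sub hf0) (by norm_num : (1 : ℝ) - 0 ≠ 0)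
      rwa [sub_zero, div_one] at this
    refine tendsto_of_tendsto_of_tendsto_of_le_of_le' hlower hf.neg ?_ ?_
    all_goals filter_upwards [hlt, self_mem_nhdsWithin] with t hft ht
    · have hx : 0 < 1 - f t := by linarith
      calc -(f t / t) / (1 - f t) = (1 - (1 - f t)⁻¹) / t := by field_simp; ring
        _ ≤ log (1 - f t) / t :=
          div_le_div_of_nonneg_right (one_sub_inv_le_log_of_pos hx) (le_of_lt ht)
    · have key := log_le_sub_one_of_pos (show 0 < 1 - f t by linarith)
      rw [← neg_div]
      exact div_le_div_of_nonneg_right (by linarith) (le_of_lt ht)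
  refine ((continuous_exp.tendsto _).comp hlog).congr' ?_
  filter_upwards [hlt] with t hft
  rw [Function.comp_apply, rpow_def_of_pos (by linarith), mul_one_div]

theorem tendsto_one_sub_exp_neg_div_div (c : ℝ) :
    Tendsto (fun t => (1 - exp (-t / c)) / t) (𝓝[≠] 0) (𝓝 c⁻¹) := by
  have hderiv : HasDerivAt (fun t => 1 - exp (-t / c)) c⁻¹ 0 := by
    have := (((hasDerivAt_id (0 : ℝ)).neg.div_const c).exp).const_sub 1
    simpa [neg_div] using this
  simpa [div_eq_inv_mul] using hderiv.tendsto_slope_zero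

theorem tendsto_integral_exp_neg_div_mul {X : Type*} [MeasurableSpace X] {μ : Measure X}
    {c g : X → ℝ} (hc_meas : Measurable c) (hc : ∀ z, 0 ≤ c z) (hg : Integrable g μ) :
    Tendsto (fun t => ∫ z, exp (-t / c z) * g z ∂μ) (𝓝[>] 0) (𝓝 (∫ z, g z ∂μ)) := by
  refine tendsto_integral_filter_of_dominated_convergence (fun z => ‖g z‖) ?_ ?_ hg.norm ?_
  · exact Eventually.of_forall fun t =>
      ((measurable_const.div hc_meas).exp.aestronglyMeasurable).mul hg.aestronglyMeasurable
  · filter_upwards [self_mem_nhdsWithin] with t ht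
    refine Eventually.of_forall fun z => ?_
    have hexp : exp (-t / c z) ≤ 1 :=
      exp_le_one_iff.mpr (div_nonpos_of_nonpos_of_nonneg (by linarith [mem_Ioi.mp ht]) (hc z))
    rw [norm_mul, norm_of_nonneg (exp_nonneg _)]
    exact mul_le_of_le_one_left (norm_nonneg _) hexp
  · refine Eventually.of_forall fun z => tendsto_nhdsWithin_of_tendsto_nhds ?_
    have hcont : Continuous fun t => exp (-t / c z) * g z := by fun_prop
    simpa using hcont.tendsto 0

theorem limit_a_pow_one_div_general {X : Type*} [MeasurableSpace X] (μ : Measure X)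
    (g₀ : X → ℝ) (w : X → ℝ) (β κ wstar : ℝ)
    (hκ : 0 < κ)
    (hw_meas : Measurable w)
    (hg₀_density : ∫ z, g₀ z ∂μ = 1)
    (hw_pos : ∀ z, 0 < w z) :
    Tendsto
      (fun t : ℝ =>
        (1 - β * (1 - Real.exp (-t / (κ * wstar)))
            * ∫ z, Real.exp (-t / (κ * w z)) * g₀ z ∂μ) ^ (1 / t))
      (nhdsWithin 0 (Ioi 0))
      (nhds (Real.exp (-β / (κ * wstar)))) := by
  have hintegral := tendsto_integral_exp_neg_div_mul (hw_meas.const_mul κ)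
    (fun z => (mul_pos hκ (hw_pos z)).le) (integrable_of_integral_eq_one hg₀_density)
  rw [hg₀_density] at hintegral
  have hslope := (tendsto_one_sub_exp_neg_div_div (κ * wstar)).mono_left (nhdsGT_le_nhdsNE 0)
  rw [neg_div]
  refine tendsto_one_sub_rpow_one_div ?_
  convert (hslope.const_mul β).mul hintegral using 2 with t
  · ring
  · rw [div_eq_mul_inv, mul_one]

/-- With `a(t) = 1 - β(1 - e^{-t/(κ w*)}) ∫ e^{-t/(κ w z)} g₀ z μ(dz)`,
we have `a(t)^{1/t} → exp(-β/(κ w*))` as `t → 0+`. -/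
theorem limit_a_pow_one_div {X : Type*} [MeasurableSpace X] (μ : Measure X)
    (g g₀ : X → ℝ) (w : X → ℝ) (β κ wstar : ℝ)
    (hβ0 : 0 < β) (hβ1 : β ≤ 1) (hκ : 0 < κ) (hwstar : 0 < wstar)
    (hg_meas : Measurable g) (hg₀_meas : Measurable g₀) (hw_meas : Measurable w)
    (hg_nonneg : ∀ z, 0 ≤ g z) (hg₀_nonneg : ∀ z, 0 ≤ g₀ z)
    (hg_density : ∫ z, g z ∂μ = 1) (hg₀_density : ∫ z, g₀ z ∂μ = 1)
    (hw_pos : ∀ z, 0 < w z) (hw_le : ∀ z, w z ≤ wstar)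
    (hdoeblin : ∀ z, β * g₀ z ≤ g z) :
    Tendsto
      (fun t : ℝ =>
        (1 - β * (1 - Real.exp (-t / (κ * wstar)))
            * ∫ z, Real.exp (-t / (κ * w z)) * g₀ z ∂μ) ^ (1 / t))
      (nhdsWithin 0 (Ioi 0))
      (nhds (Real.exp (-β / (κ * wstar)))) :=
  limit_a_pow_one_div_general μ g₀ w β κ wstar hκ hw_meas hg₀_density hw_pos
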